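/- arXiv:2604.03060 — 7 statements merged into one kernel-verified Lean document; each statement's English description precedes it below -/
import Mathlib

section
/- Let c, k, α be real numbers with 0 < k, 4k < c, and 0 < α < √((c − 4k)/(c − k)). Then for every λ ∈ ℂ with Re λ ≥ 0, the cubic polynomial p(r) = (c − k)r³ − λr² − (c − 4k)r + λ has, counted with multiplicity, exactly one root r with Re r < −α and exactly two roots r with Re r > −α; in particular it has no root with Re r = −α. -/
/-!
For a root `r = x + iy` of the characteristic polynomial one has
`Re λ · |r² − 1|² = x · G(x, y)`, where `G` is positive as soon as `x² (c − k) < c − 4k`.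
So when `Re λ ≥ 0` no root has real part in `(−√((c − 4k)/(c − k)), 0)`; in particular none lies
on the line `Re r = −α`. The roots of a family of polynomials of constant degree with continuous
coefficients depend continuously on the parameter, so the number of roots left of that line is
locally constant, hence constant on the connected half-plane `Re λ ≥ 0`. At `λ = 0` the roots are
`0` and `±√((c − 4k)/(c − k))`, exactly one of which lies left of the line.
-/

open Polynomial Filter Topology

theorem Multiset.exists_fin_map_eq {α : Type*} {n : ℕ} (s : Multiset α) (hs : card s = n) :
    ∃ v : Fin n → α, Finset.univ.val.map v = s := by
  obtain ⟨l, rfl⟩ : ∃ l : List α, (l : Multiset α) = s := Quotient.exists_rep s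
  rw [Multiset.coe_card] at hs
  subst hs
  exact ⟨l.get, by rw [Fin.univ_val_map, List.ofFn_get]⟩

theorem Multiset.eventually_card_filter_map_eq {α ι β : Type*} [TopologicalSpace α] [Fintype ι]
    {l : Filter β} {P : α → Prop} [DecidablePred P] {v : β → ι → α} {v₀ : ι → α}
    (hv : Tendsto v l (𝓝 v₀)) (hP : ∀ i, ∀ᶠ z in 𝓝 (v₀ i), (P z ↔ P (v₀ i))) :
    ∀ᶠ b in l, card ((Finset.univ.val.map (v b)).filter P) =
      card ((Finset.univ.val.map v₀).filter P) := by
  have hcoord : ∀ᶠ b in l, ∀ i, (P (v b i) ↔ P (v₀ i)) :=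
    eventually_all.2 fun i => (tendsto_pi_nhds.1 hv i).eventually (hP i)
  filter_upwards [hcoord] with b hb
  simp only [Multiset.filter_map, Multiset.card_map]
  exact congrArg card (Multiset.filter_congr fun i _ => hb i)

namespace Polynomial

theorem exists_roots_eq_map_fin {q : ℂ[X]} {d : ℕ} (hq : q.natDegree = d) :
    ∃ v : Fin d → ℂ, q.roots = Finset.univ.val.map v :=
  (Multiset.exists_fin_map_eq _
    ((splits_iff_card_roots.1 (IsAlgClosed.splits q)).trans hq)).imp fun _ hv => hv.symm

theorem eq_C_leadingCoeff_mul_prod {q : ℂ[X]} {d : ℕ} {v : Fin d → ℂ}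
    (hq : q.roots = Finset.univ.val.map v) :
    q = C q.leadingCoeff * ∏ i, (X - C (v i)) := by
  conv_lhs => rw [← C_leadingCoeff_mul_prod_multiset_X_sub_C
    (splits_iff_card_roots.1 (IsAlgClosed.splits q)), hq, Multiset.map_map]
  rfl

theorem roots_C_mul_prod_X_sub_C {a : ℂ} (ha : a ≠ 0) {d : ℕ} (v : Fin d → ℂ) :
    (C a * ∏ i, (X - C (v i))).roots = Finset.univ.val.map v := by
  rw [roots_C_mul _ ha, ← roots_multiset_prod_X_sub_C (Finset.univ.val.map v), Multiset.map_map]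
  rfl

section Family

variable {T : Type*} [TopologicalSpace T] {p : T → ℂ[X]} {d : ℕ} {t₀ : T}

theorem continuousAt_eval_of_continuousAt_coeff (hdeg : ∀ t, (p t).degree = d)
    (hcoeff : ∀ i, ContinuousAt (fun t => (p t).coeff i) t₀) (z : ℂ) :
    ContinuousAt (fun t => (p t).eval z) t₀ := by
  have hlt : ∀ t, (p t).natDegree < d + 1 := fun t => by
    rw [natDegree_eq_of_degree_eq_some (hdeg t)]; exact d.lt_succ_self
  simp only [eval_eq_sum_range' (hlt _)]
  exact tendsto_finsetSum _ fun i _ => (hcoeff i).mul continuousAt_const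

theorem exists_eventually_norm_roots_le (hdeg : ∀ t, (p t).degree = d)
    (hcoeff : ∀ i, ContinuousAt (fun t => (p t).coeff i) t₀) :
    ∃ R : NNReal, ∀ᶠ t in 𝓝 t₀, ∀ z ∈ (p t).roots, ‖z‖ ≤ R := by
  have hnat : ∀ t, (p t).natDegree = d := fun t => natDegree_eq_of_degree_eq_some (hdeg t)
  have hlead : ∀ t, (p t).leadingCoeff = (p t).coeff d := fun t => by rw [leadingCoeff, hnat]
  have hne : ∀ t, p t ≠ 0 := fun t h => by simpa [h] using hdeg t
  set m : NNReal := ‖(p t₀).coeff d‖₊ / 2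
  set M : NNReal := ∑ i ∈ Finset.range d, (‖(p t₀).coeff i‖₊ + 1)
  have hlc : 0 < ‖(p t₀).coeff d‖₊ := nnnorm_pos.2 (hlead t₀ ▸ leadingCoeff_ne_zero.2 (hne t₀))
  have hlow : ∀ᶠ t in 𝓝 t₀, m < ‖(p t).coeff d‖₊ :=
    (hcoeff d).nnnorm.eventually (lt_mem_nhds (NNReal.half_lt_self hlc.ne'))
  have hup : ∀ᶠ t in 𝓝 t₀, ∀ i ∈ Finset.range d, ‖(p t).coeff i‖₊ < ‖(p t₀).coeff i‖₊ + 1 :=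
    (Finset.range d).eventually_all.2 fun i _ =>
      (hcoeff i).nnnorm.eventually (gt_mem_nhds (lt_add_one _))
  refine ⟨M / m + 1, ?_⟩
  filter_upwards [hlow, hup] with t hlow hup z hz
  have hbound : cauchyBound (p t) ≤ M / m + 1 := by
    rw [cauchyBound, hnat, hlead]
    gcongr
    exact Finset.sup_le fun i hi => (hup i hi).le.trans
      (Finset.single_le_sum (f := fun i => ‖(p t₀).coeff i‖₊ + 1) (fun _ _ => by positivity) hi)
  have := (IsRoot.norm_lt_cauchyBound (hne t) (isRoot_of_mem_roots hz)).trans_le hbound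
  exact_mod_cast this.le

theorem roots_eq_map_of_tendsto (hdeg : ∀ t, (p t).degree = d)
    (hcoeff : ∀ i, ContinuousAt (fun t => (p t).coeff i) t₀) {ts : ℕ → T}
    (hts : Tendsto ts atTop (𝓝 t₀)) {v : ℕ → Fin d → ℂ} {v₀ : Fin d → ℂ}
    (hv : Tendsto v atTop (𝓝 v₀)) (hroots : ∀ n, (p (ts n)).roots = Finset.univ.val.map (v n)) :
    (p t₀).roots = Finset.univ.val.map v₀ := by
  have hlead : ∀ t, (p t).leadingCoeff = (p t).coeff d := fun t => by
    rw [leadingCoeff, natDegree_eq_of_degree_eq_some (hdeg t)]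
  have hne : (p t₀).coeff d ≠ 0 := by
    rw [← hlead, leadingCoeff_ne_zero]
    rintro h
    simpa [h] using hdeg t₀
  suffices p t₀ = C ((p t₀).coeff d) * ∏ i, (X - C (v₀ i)) by
    rw [this, roots_C_mul_prod_X_sub_C hne]
  refine Polynomial.funext fun z => tendsto_nhds_unique
    ((continuousAt_eval_of_continuousAt_coeff hdeg hcoeff z).tendsto.comp hts) ?_
  have hfac : ∀ n, (p (ts n)).eval z = (p (ts n)).coeff d * ∏ i, (z - v n i) := fun n => by
    conv_lhs => rw [eq_C_leadingCoeff_mul_prod (hroots n)]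
    simp [hlead, eval_prod]
  simp only [Function.comp_def, hfac, eval_mul, eval_C, eval_prod, eval_sub, eval_X]
  exact ((hcoeff d).tendsto.comp hts).mul
    (tendsto_finsetProd _ fun i _ => tendsto_const_nhds.sub (tendsto_pi_nhds.1 hv i))

theorem eventually_card_filter_roots_eq [FirstCountableTopology T]
    (hdeg : ∀ t, (p t).degree = d) (hcoeff : ∀ i, ContinuousAt (fun t => (p t).coeff i) t₀)
    {P : ℂ → Prop} [DecidablePred P] (hP : ∀ z ∈ (p t₀).roots, ∀ᶠ w in 𝓝 z, (P w ↔ P z)) :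
    ∀ᶠ t in 𝓝 t₀, ((p t).roots.filter P).card = ((p t₀).roots.filter P).card := by
  rw [← tendsto_pure]
  refine tendsto_of_subseq_tendsto fun ts hts => ?_
  choose v hv using fun n =>
    exists_roots_eq_map_fin (natDegree_eq_of_degree_eq_some (hdeg (ts n)))
  obtain ⟨R, hR⟩ := exists_eventually_norm_roots_le hdeg hcoeff
  have hbdd : ∀ᶠ n in atTop, v n ∈ Metric.closedBall 0 (R : ℝ) :=
    (hts.eventually hR).mono fun n hn => by
      rw [mem_closedBall_zero_iff]
      exact (pi_norm_le_iff_of_nonneg R.2).2 fun i =>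
        hn _ (hv n ▸ Multiset.mem_map_of_mem _ (Finset.mem_univ_val i))
  obtain ⟨v₀, -, φ, hφ, hvφ⟩ :=
    tendsto_subseq_of_frequently_bounded Metric.isBounded_closedBall hbdd.frequently
  have h₀ :=
    roots_eq_map_of_tendsto hdeg hcoeff (hts.comp hφ.tendsto_atTop) hvφ (fun n => hv (φ n))
  refine ⟨φ, tendsto_pure.2 ?_⟩
  have hPv : ∀ i, ∀ᶠ w in 𝓝 (v₀ i), (P w ↔ P (v₀ i)) := fun i =>
    hP _ (h₀ ▸ Multiset.mem_map_of_mem _ (Finset.mem_univ_val i))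
  filter_upwards [Multiset.eventually_card_filter_map_eq hvφ hPv] with n hn
  rw [hv, h₀]
  exact hn

end Family

end Polynomial

theorem Complex.eventually_re_lt_iff {z : ℂ} {a : ℝ} (hz : z.re ≠ a) :
    ∀ᶠ w in 𝓝 z, (w.re < a ↔ z.re < a) := by
  have hre := Complex.continuous_re.tendsto z
  rcases hz.lt_or_gt with hlt | hgt
  · filter_upwards [hre.eventually_lt_const hlt] with w hw
    exact iff_of_true hw hlt
  · filter_upwards [hre.eventually_const_lt hgt] with w hw
    exact iff_of_false hw.not_gt hgt.not_gt

noncomputable def dpCharPoly (c k : ℝ) (lam : ℂ) : ℂ[X] :=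
  C ((c : ℂ) - (k : ℂ)) * X ^ 3 - C lam * X ^ 2 - C ((c : ℂ) - 4 * (k : ℂ)) * X + C lam

section DP

variable {c k : ℝ}

theorem degree_dpCharPoly (hkc : k < c) (lam : ℂ) : (dpCharPoly c k lam).degree = 3 := by
  unfold dpCharPoly
  compute_degree!
  exact (sub_pos.2 hkc).ne'

theorem continuous_coeff_dpCharPoly (i : ℕ) :
    Continuous fun lam => (dpCharPoly c k lam).coeff i := by
  have h : ∀ lam, dpCharPoly c k lam =
      C ((c : ℂ) - (k : ℂ)) * X ^ 3 - C ((c : ℂ) - 4 * (k : ℂ)) * X + C lam * (1 - X ^ 2) :=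
    fun lam => by unfold dpCharPoly; ring
  simp only [h, coeff_add, coeff_C_mul]
  fun_prop

theorem le_re_sq_mul_of_isRoot_dpCharPoly (hk : 0 < k) (hkc : k < c) {lam r : ℂ}
    (hlam : 0 ≤ lam.re) (hr : (dpCharPoly c k lam).IsRoot r) (hneg : r.re < 0) :
    c - 4 * k ≤ r.re ^ 2 * (c - k) := by
  by_contra! hstrip
  have hr' : (c - k : ℂ) * r ^ 3 - lam * r ^ 2 - (c - 4 * k) * r + lam = 0 := by
    simpa [dpCharPoly] using hr
  obtain ⟨x, y⟩ := r
  have hre := congrArg Complex.re hr'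
  have him := congrArg Complex.im hr'
  simp only [Complex.add_re, Complex.sub_re, Complex.mul_re, Complex.mul_im,
    Complex.add_im, Complex.sub_im, Complex.ofReal_re, Complex.ofReal_im,
    pow_succ, pow_zero, one_mul, Complex.zero_re,
    Complex.zero_im, Complex.re_ofNat, Complex.im_ofNat] at hre him
  -- the real and imaginary parts of `p(r) = 0`, weighted by those of `r ^ 2 - 1`
  have key : lam.re * ((x ^ 2 - y ^ 2 - 1) ^ 2 + (2 * x * y) ^ 2)
      = x * ((c - k) * y ^ 4 + (2 * (c - k) * x ^ 2 + 2 * c + k) * y ^ 2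
          + (x ^ 2 * (c - k) - (c - 4 * k)) * (x ^ 2 - 1)) := by
    linear_combination (-(x ^ 2 - y ^ 2 - 1)) * hre + (-(2 * x * y)) * him
  have hx1 : x ^ 2 < 1 := by nlinarith
  have hG : 0 < (c - k) * y ^ 4 + (2 * (c - k) * x ^ 2 + 2 * c + k) * y ^ 2
      + (x ^ 2 * (c - k) - (c - 4 * k)) * (x ^ 2 - 1) := by
    have : 0 ≤ (2 * (c - k) * x ^ 2 + 2 * c + k) * y ^ 2 := by
      apply mul_nonneg _ (sq_nonneg y); nlinarith [sq_nonneg x]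
    nlinarith [mul_pos (sub_pos.2 hstrip) (sub_pos.2 hx1), sq_nonneg (y ^ 2)]
  nlinarith [mul_nonneg hlam (add_nonneg (sq_nonneg (x ^ 2 - y ^ 2 - 1)) (sq_nonneg (2 * x * y))),
    mul_neg_of_neg_of_pos hneg hG]

theorem dpCharPoly_zero_eq (hkc : k < c) (hck : 4 * k ≤ c) :
    dpCharPoly c k 0 = C ((c : ℂ) - k) *
      ∏ i, (X - C (![-(√((c - 4 * k) / (c - k)) : ℂ), √((c - 4 * k) / (c - k)), 0] i)) := by
  have hβ : √((c - 4 * k) / (c - k)) ^ 2 * (c - k) = c - 4 * k := by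
    rw [Real.sq_sqrt (div_nonneg (by linarith) (by linarith))]
    field_simp [(sub_pos.2 hkc).ne']
  have hβC : C (√((c - 4 * k) / (c - k)) : ℂ) ^ 2 * C ((c : ℂ) - k) = C ((c : ℂ) - 4 * k) := by
    rw [← map_pow, ← map_mul]
    exact_mod_cast congrArg (fun x : ℝ => C (x : ℂ)) hβ
  simp only [dpCharPoly, Fin.prod_univ_three, Matrix.cons_val, map_neg, map_zero]
  linear_combination X * hβC

theorem card_filter_roots_dpCharPoly_zero {α : ℝ} (hk : 0 < k) (hck : 4 * k < c) (hα0 : 0 < α)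
    (hα : α < √((c - 4 * k) / (c - k))) :
    ((dpCharPoly c k 0).roots.filter fun r => r.re < -α).card = 1 := by
  have hkc : k < c := by linarith
  rw [dpCharPoly_zero_eq hkc hck.le,
    roots_C_mul_prod_X_sub_C (by exact_mod_cast (sub_pos.2 hkc).ne')]
  have hβ : 0 < √((c - 4 * k) / (c - k)) := hα0.trans hα
  simp [Fin.univ_val_map, List.ofFn_succ, hα, hα0.le, hβ.le.trans' (neg_nonpos.2 hα0.le)]

theorem card_roots_dpCharPoly (hkc : k < c) (lam : ℂ) : (dpCharPoly c k lam).roots.card = 3 := by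
  rw [← natDegree_eq_of_degree_eq_some (degree_dpCharPoly hkc lam)]
  exact splits_iff_card_roots.1 (IsAlgClosed.splits _)

theorem re_ne_of_mem_roots_dpCharPoly {α : ℝ} (hk : 0 < k) (hck : 4 * k < c) (hα0 : 0 < α)
    (hα : α < √((c - 4 * k) / (c - k))) {lam : ℂ} (hlam : 0 ≤ lam.re) :
    ∀ r ∈ (dpCharPoly c k lam).roots, r.re ≠ -α := fun r hr hre => by
  have hkc : k < c := by linarith
  have hα2 : α ^ 2 * (c - k) < c - 4 * k :=
    (lt_div_iff₀ (sub_pos.2 hkc)).1 ((Real.lt_sqrt hα0.le).1 hα)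
  refine (le_re_sq_mul_of_isRoot_dpCharPoly hk hkc hlam (isRoot_of_mem_roots hr)
    (hre ▸ neg_neg_of_pos hα0)).not_gt ?_
  rwa [hre, neg_sq]

theorem card_filter_roots_dpCharPoly_eq_one {α : ℝ} (hk : 0 < k) (hck : 4 * k < c)
    (hα0 : 0 < α) (hα : α < √((c - 4 * k) / (c - k))) {lam : ℂ} (hlam : 0 ≤ lam.re) :
    ((dpCharPoly c k lam).roots.filter fun r => r.re < -α).card = 1 := by
  rw [← card_filter_roots_dpCharPoly_zero hk hck hα0 hα]
  refine (convex_halfSpace_re_ge 0).isPreconnected.constant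
    (f := fun lam => ((dpCharPoly c k lam).roots.filter fun r => r.re < -α).card)
    (fun lam₀ h₀ => ContinuousAt.continuousWithinAt ?_) (x := lam) (y := 0) hlam (by simp)
  rw [ContinuousAt, nhds_discrete ℕ, tendsto_pure]
  exact eventually_card_filter_roots_eq (degree_dpCharPoly (by linarith))
    (fun i => (continuous_coeff_dpCharPoly i).continuousAt)
    fun z hz => Complex.eventually_re_lt_iff (re_ne_of_mem_roots_dpCharPoly hk hck hα0 hα h₀ z hz)

end DP

/-- For `0 < k`, `4k < c`, `0 < α < √((c−4k)/(c−k))` and `Re λ ≥ 0`,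
the characteristic polynomial `(c − k) r³ − λ r² − (c − 4k) r + λ` has (with
multiplicity) exactly one root with `Re r < −α` and exactly two roots with
`Re r > −α`, and no root with `Re r = −α`. -/
theorem dp_characteristic_roots_weighted (c k α : ℝ) (hk : 0 < k) (hck : 4 * k < c)
    (hα0 : 0 < α) (hα : α < Real.sqrt ((c - 4 * k) / (c - k)))
    (lam : ℂ) (hlam : 0 ≤ lam.re) :
    Multiset.card
        (((C ((c : ℂ) - (k : ℂ)) * X ^ 3 - C lam * X ^ 2
            - C ((c : ℂ) - 4 * (k : ℂ)) * X + C lam : ℂ[X]).roots).filter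
          fun r => r.re < -α) = 1 ∧
    Multiset.card
        (((C ((c : ℂ) - (k : ℂ)) * X ^ 3 - C lam * X ^ 2
            - C ((c : ℂ) - 4 * (k : ℂ)) * X + C lam : ℂ[X]).roots).filter
          fun r => -α < r.re) = 2 ∧
    ∀ r ∈ (C ((c : ℂ) - (k : ℂ)) * X ^ 3 - C lam * X ^ 2
        - C ((c : ℂ) - 4 * (k : ℂ)) * X + C lam : ℂ[X]).roots, r.re ≠ -α := by
  change ((dpCharPoly c k lam).roots.filter _).card = 1 ∧
    ((dpCharPoly c k lam).roots.filter _).card = 2 ∧ ∀ r ∈ (dpCharPoly c k lam).roots, _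
  have hline := re_ne_of_mem_roots_dpCharPoly hk hck hα0 hα hlam
  have hleft := card_filter_roots_dpCharPoly_eq_one hk hck hα0 hα hlam
  have hright : ((dpCharPoly c k lam).roots.filter fun r => ¬r.re < -α) =
      (dpCharPoly c k lam).roots.filter fun r => -α < r.re :=
    Multiset.filter_congr fun r hr => not_lt.trans (hline r hr).symm.le_iff_lt
  have hsplit := congrArg Multiset.card
    (Multiset.filter_add_not (fun r => r.re < -α) (dpCharPoly c k lam).roots)
  rw [Multiset.card_add, hleft, card_roots_dpCharPoly (by linarith), hright] at hsplit
  exact ⟨hleft, by omega, hline⟩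
end

section
/- Let c, k, α be real numbers with 0 < k, 4k < c, 0 < α < 1, and α² < (c − 4k)/(c − k). Define R(σ) = −α·( c − k + 3k(α² + σ² − 1) / ((1 + σ² − α²)² + 4σ²α²) ) for σ ∈ ℝ. Then for every σ ∈ ℝ one has R(σ) ≤ −α(c − k − 3k/(1 − α²)) < 0, with equality R(σ) = −α(c − k − 3k/(1 − α²)) if and only if σ = 0. In particular the spectral gap Δ_α := α(c − k − 3k/(1 − α²)) is strictly positive. -/
/-- For `0 < k`, `4k < c`, `0 < α < 1` with `α² < (c−4k)/(c−k)`, the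
real part `R(σ)` of the weighted essential-spectrum curve satisfies
`R(σ) ≤ −α(c − k − 3k/(1 − α²)) < 0`, with equality iff `σ = 0`; in particular the
spectral gap `Δ_α = α(c − k − 3k/(1 − α²))` is strictly positive. -/
theorem dp_weighted_essential_spectrum_gap (c k α : ℝ) (hk : 0 < k) (hck : 4 * k < c)
    (hα0 : 0 < α) (hα1 : α < 1) (hαc : α ^ 2 < (c - 4 * k) / (c - k)) :
    (∀ σ : ℝ,
      -α * (c - k + 3 * k * (α ^ 2 + σ ^ 2 - 1)
          / ((1 + σ ^ 2 - α ^ 2) ^ 2 + 4 * σ ^ 2 * α ^ 2))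
        ≤ -(α * (c - k - 3 * k / (1 - α ^ 2)))) ∧
    (∀ σ : ℝ,
      -α * (c - k + 3 * k * (α ^ 2 + σ ^ 2 - 1)
          / ((1 + σ ^ 2 - α ^ 2) ^ 2 + 4 * σ ^ 2 * α ^ 2))
        = -(α * (c - k - 3 * k / (1 - α ^ 2))) ↔ σ = 0) ∧
    0 < α * (c - k - 3 * k / (1 - α ^ 2)) := by
  have hE : 0 < 1 - α ^ 2 := by nlinarith
  have hck' : 0 < c - k := by linarith
  have hαc' : α ^ 2 * (c - k) < c - 4 * k := by
    rwa [lt_div_iff₀ hck'] at hαc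
  have key : ∀ σ : ℝ,
      0 < (1 + σ ^ 2 - α ^ 2) ^ 2 + 4 * σ ^ 2 * α ^ 2 ∧
      -(α * (c - k - 3 * k / (1 - α ^ 2))) -
        (-α * (c - k + 3 * k * (α ^ 2 + σ ^ 2 - 1)
          / ((1 + σ ^ 2 - α ^ 2) ^ 2 + 4 * σ ^ 2 * α ^ 2)))
        = 3 * α * k * (σ ^ 2 * (σ ^ 2 + α ^ 2 + 3)) /
          (((1 + σ ^ 2 - α ^ 2) ^ 2 + 4 * σ ^ 2 * α ^ 2) * (1 - α ^ 2)) := by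
    intro σ
    have h1 : 0 < 1 + σ ^ 2 - α ^ 2 := by nlinarith [sq_nonneg σ]
    have hD : 0 < (1 + σ ^ 2 - α ^ 2) ^ 2 + 4 * σ ^ 2 * α ^ 2 := by
      nlinarith [sq_nonneg (σ * α)]
    refine ⟨hD, ?_⟩
    field_simp
    ring
  have hnum : ∀ σ : ℝ, 0 ≤ σ ^ 2 * (σ ^ 2 + α ^ 2 + 3) := by
    intro σ
    have := sq_nonneg σ
    nlinarith [sq_nonneg α]
  refine ⟨fun σ => ?_, fun σ => ?_, ?_⟩
  · obtain ⟨hD, hkey⟩ := key σ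
    have h2 : 0 ≤ 3 * α * k * (σ ^ 2 * (σ ^ 2 + α ^ 2 + 3)) /
        (((1 + σ ^ 2 - α ^ 2) ^ 2 + 4 * σ ^ 2 * α ^ 2) * (1 - α ^ 2)) := by
      apply div_nonneg
      · have := hnum σ; positivity
      · positivity
    linarith
  · obtain ⟨hD, hkey⟩ := key σ
    constructor
    · intro heq
      have h0 : 3 * α * k * (σ ^ 2 * (σ ^ 2 + α ^ 2 + 3)) /
          (((1 + σ ^ 2 - α ^ 2) ^ 2 + 4 * σ ^ 2 * α ^ 2) * (1 - α ^ 2)) = 0 := by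
        linarith
      have hden : 0 < ((1 + σ ^ 2 - α ^ 2) ^ 2 + 4 * σ ^ 2 * α ^ 2) * (1 - α ^ 2) := by
        positivity
      rw [div_eq_zero_iff] at h0
      rcases h0 with h0 | h0
      · have hσ2 : σ ^ 2 * (σ ^ 2 + α ^ 2 + 3) = 0 := by
          have h3 : (0:ℝ) < 3 * α * k := by positivity
          rcases mul_eq_zero.mp h0 with h | h
          · exact absurd h h3.ne'
          · exact h
        have hpos : 0 < σ ^ 2 + α ^ 2 + 3 := by positivity
        have : σ ^ 2 = 0 := by
          rcases mul_eq_zero.mp hσ2 with h | h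
          · exact h
          · exact absurd h hpos.ne'
        exact pow_eq_zero_iff (n := 2) (by norm_num) |>.mp this
      · exact absurd h0 hden.ne'
    · rintro rfl
      have hz : (3:ℝ) * α * k * ((0:ℝ) ^ 2 * ((0:ℝ) ^ 2 + α ^ 2 + 3)) /
          (((1 + (0:ℝ) ^ 2 - α ^ 2) ^ 2 + 4 * (0:ℝ) ^ 2 * α ^ 2) * (1 - α ^ 2)) = 0 := by
        norm_num
      simp only [hz] at hkey
      linarith
  · have h3 : 3 * k / (1 - α ^ 2) < c - k := by
      rw [div_lt_iff₀ hE]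
      nlinarith
    have : 0 < c - k - 3 * k / (1 - α ^ 2) := by linarith
    positivity
end

section
/- Let c, k ∈ ℝ and let u₀ : ℝ → ℝ be three times continuously differentiable and satisfy the profile equation −(c − u₀(ξ))·(u₀'(ξ) − u₀'''(ξ)) + 3u₀'(ξ)·(u₀(ξ) − u₀''(ξ)) = 0 for all ξ ∈ ℝ. Then the function ψ := (2/3)(u₀ − k) satisfies, for all ξ ∈ ℝ, (2/3)(c − k)·(ψ'(ξ) − ψ'''(ξ)) + 3ψ'(ξ)ψ''(ξ) − 4ψ(ξ)ψ'(ξ) + ψ(ξ)ψ'''(ξ) − 2kψ'(ξ) = 0. -/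
/-- If `u₀` is `C³` and satisfies the DP profile equation with speed `c`,
then the Galilean shift `ψ = (2/3)(u₀ − k)` satisfies
`(2/3)(c − k)(ψ' − ψ''') + 3ψ'ψ'' − 4ψψ' + ψψ''' − 2kψ' = 0`. -/
theorem dp_galilean_shift (c k : ℝ) (u₀ : ℝ → ℝ) (hu : ContDiff ℝ 3 u₀)
    (hprof : ∀ ξ : ℝ,
      -(c - u₀ ξ) * (deriv u₀ ξ - deriv (deriv (deriv u₀)) ξ)
        + 3 * deriv u₀ ξ * (u₀ ξ - deriv (deriv u₀) ξ) = 0) :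
    ∀ ξ : ℝ,
      (2 / 3) * (c - k) * (deriv (fun x => (2 / 3) * (u₀ x - k)) ξ
          - deriv (deriv (deriv (fun x => (2 / 3) * (u₀ x - k)))) ξ)
        + 3 * deriv (fun x => (2 / 3) * (u₀ x - k)) ξ
            * deriv (deriv (fun x => (2 / 3) * (u₀ x - k))) ξ
        - 4 * ((2 / 3) * (u₀ ξ - k)) * deriv (fun x => (2 / 3) * (u₀ x - k)) ξ
        + ((2 / 3) * (u₀ ξ - k))
            * deriv (deriv (deriv (fun x => (2 / 3) * (u₀ x - k)))) ξ
        - 2 * k * deriv (fun x => (2 / 3) * (u₀ x - k)) ξ = 0 := by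
  have hu1 : Differentiable ℝ u₀ := hu.differentiable (by norm_num)
  have hdu : ContDiff ℝ 2 (deriv u₀) := (contDiff_succ_iff_deriv.mp hu).2.2
  have hdu1 : Differentiable ℝ (deriv u₀) := hdu.differentiable (by norm_num)
  have hddu : ContDiff ℝ 1 (deriv (deriv u₀)) := (contDiff_succ_iff_deriv.mp hdu).2.2
  have hddu1 : Differentiable ℝ (deriv (deriv u₀)) := hddu.differentiable (by norm_num)
  have e1 : deriv (fun x => (2 / 3 : ℝ) * (u₀ x - k)) = fun x => (2 / 3) * deriv u₀ x := by
    funext x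
    rw [deriv_const_mul _ ((hu1 x).sub_const k), deriv_sub_const]
  have e2 : deriv (deriv (fun x => (2 / 3 : ℝ) * (u₀ x - k)))
      = fun x => (2 / 3) * deriv (deriv u₀) x := by
    rw [e1]; funext x
    rw [deriv_const_mul _ (hdu1 x)]
  have e3 : deriv (deriv (deriv (fun x => (2 / 3 : ℝ) * (u₀ x - k))))
      = fun x => (2 / 3) * deriv (deriv (deriv u₀)) x := by
    rw [e2]; funext x
    rw [deriv_const_mul _ (hddu1 x)]
  intro ξ
  rw [e3, e2, e1]
  have := hprof ξ
  nlinarith [this]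
end

section
/- Let c ∈ ℝ and σ ∈ ℝ with σ ≠ 0, let u : ℝ × ℝ → ℝ be infinitely differentiable, and set m := u − ∂²_ξ u. Suppose φ : ℝ × ℝ → ℝ is infinitely differentiable, φ(ξ, t) ≠ 0 for all (ξ, t), and for all (ξ, t): ∂³_ξφ = ∂_ξφ + σ m φ and ∂_tφ = (1/σ)∂²_ξφ + (c − u)∂_ξφ + (∂_ξ u) φ. Then for all (ξ, t): ∂_t m + (u − c)∂_ξ m + 3(∂_ξ u) m = 0. -/
/-- Partial derivative in the first (spatial) variable `ξ`. -/
noncomputable def pdx (f : ℝ → ℝ → ℝ) : ℝ → ℝ → ℝ :=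
  fun ξ t => deriv (fun x => f x t) ξ

/-- Partial derivative in the second (temporal) variable `t`. -/
noncomputable def pdt (f : ℝ → ℝ → ℝ) : ℝ → ℝ → ℝ :=
  fun ξ t => deriv (fun s => f ξ s) t

def Sm (f : ℝ → ℝ → ℝ) : Prop := ContDiff ℝ (⊤ : ℕ∞) fun p : ℝ × ℝ => f p.1 p.2

namespace Sm

variable {f g : ℝ → ℝ → ℝ}

lemma sliceX (hf : Sm f) (t ξ : ℝ) : DifferentiableAt ℝ (fun x => f x t) ξ := by
  have h : (fun x : ℝ => f x t) = (fun p : ℝ × ℝ => f p.1 p.2) ∘ (fun x : ℝ => (x, t)) := rfl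
  rw [h]
  exact ((hf.differentiable (by simp)).comp
    (differentiable_id.prodMk (differentiable_const t))).differentiableAt

lemma sliceT (hf : Sm f) (ξ t : ℝ) : DifferentiableAt ℝ (fun s => f ξ s) t := by
  have h : (fun s : ℝ => f ξ s) = (fun p : ℝ × ℝ => f p.1 p.2) ∘ (fun s : ℝ => (ξ, s)) := rfl
  rw [h]
  exact ((hf.differentiable (by simp)).comp
    ((differentiable_const ξ).prodMk differentiable_id)).differentiableAt

lemma add (hf : Sm f) (hg : Sm g) : Sm (fun x s => f x s + g x s) := ContDiff.add hf hg

lemma sub (hf : Sm f) (hg : Sm g) : Sm (fun x s => f x s - g x s) := ContDiff.sub hf hg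

lemma mul (hf : Sm f) (hg : Sm g) : Sm (fun x s => f x s * g x s) := ContDiff.mul hf hg

lemma const_mul (a : ℝ) (hf : Sm f) : Sm (fun x s => a * f x s) :=
  ContDiff.mul contDiff_const hf

lemma const_sub (a : ℝ) (hf : Sm f) : Sm (fun x s => a - f x s) :=
  ContDiff.sub contDiff_const hf

end Sm

lemma pdx_eval {f : ℝ → ℝ → ℝ} (hf : Sm f) (ξ t : ℝ) :
    pdx f ξ t = fderiv ℝ (fun p : ℝ × ℝ => f p.1 p.2) (ξ, t) (1, 0) := by
  have h1 : HasDerivAt (fun x : ℝ => (x, t)) ((1 : ℝ), (0 : ℝ)) ξ :=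
    HasDerivAt.prodMk (hasDerivAt_id ξ) (hasDerivAt_const ξ t)
  have h2 := (((hf.differentiable (by simp)) (ξ, t)).hasFDerivAt).comp_hasDerivAt ξ h1
  exact h2.deriv

lemma pdt_eval {f : ℝ → ℝ → ℝ} (hf : Sm f) (ξ t : ℝ) :
    pdt f ξ t = fderiv ℝ (fun p : ℝ × ℝ => f p.1 p.2) (ξ, t) (0, 1) := by
  have h1 : HasDerivAt (fun s : ℝ => (ξ, s)) ((0 : ℝ), (1 : ℝ)) t :=
    HasDerivAt.prodMk (hasDerivAt_const t ξ) (hasDerivAt_id t)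
  have h2 := (((hf.differentiable (by simp)) (ξ, t)).hasFDerivAt).comp_hasDerivAt t h1
  exact h2.deriv

lemma Sm.pdx {f : ℝ → ℝ → ℝ} (hf : Sm f) : Sm (_root_.pdx f) := by
  have h : (fun p : ℝ × ℝ => _root_.pdx f p.1 p.2)
      = fun p : ℝ × ℝ => fderiv ℝ (fun q : ℝ × ℝ => f q.1 q.2) p (1, 0) :=
    funext fun p => pdx_eval hf p.1 p.2
  show ContDiff ℝ (⊤ : ℕ∞) _
  rw [h]
  exact (hf.fderiv_right (by simp)).clm_apply contDiff_const

lemma Sm.pdt {f : ℝ → ℝ → ℝ} (hf : Sm f) : Sm (_root_.pdt f) := by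
  have h : (fun p : ℝ × ℝ => _root_.pdt f p.1 p.2)
      = fun p : ℝ × ℝ => fderiv ℝ (fun q : ℝ × ℝ => f q.1 q.2) p (0, 1) :=
    funext fun p => pdt_eval hf p.1 p.2
  show ContDiff ℝ (⊤ : ℕ∞) _
  rw [h]
  exact (hf.fderiv_right (by simp)).clm_apply contDiff_const

lemma pdt_pdx_comm {f : ℝ → ℝ → ℝ} (hf : Sm f) (ξ t : ℝ) :
    pdt (pdx f) ξ t = pdx (pdt f) ξ t := by
  have hdF : Differentiable ℝ (fun p : ℝ × ℝ => f p.1 p.2) := hf.differentiable (by simp)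
  have hdF2 : Differentiable ℝ (fderiv ℝ (fun p : ℝ × ℝ => f p.1 p.2)) :=
    (hf.fderiv_right (m := (⊤ : ℕ∞)) (by simp)).differentiable (by simp)
  have hsymm := second_derivative_symmetric
    (f' := fderiv ℝ (fun p : ℝ × ℝ => f p.1 p.2))
    (f'' := fderiv ℝ (fderiv ℝ (fun p : ℝ × ℝ => f p.1 p.2)) (ξ, t))
    (fun y => (hdF y).hasFDerivAt) ((hdF2 (ξ, t)).hasFDerivAt)
    ((1 : ℝ), (0 : ℝ)) ((0 : ℝ), (1 : ℝ))
  have e1 : pdt (pdx f) ξ t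
      = fderiv ℝ (fderiv ℝ (fun p : ℝ × ℝ => f p.1 p.2)) (ξ, t) (0, 1) (1, 0) := by
    rw [pdt_eval hf.pdx ξ t]
    have h3 : (fun p : ℝ × ℝ => pdx f p.1 p.2)
        = fun p : ℝ × ℝ => fderiv ℝ (fun q : ℝ × ℝ => f q.1 q.2) p (1, 0) :=
      funext fun p => pdx_eval hf p.1 p.2
    rw [h3]
    have h4 : HasFDerivAt
        (fun p : ℝ × ℝ => fderiv ℝ (fun q : ℝ × ℝ => f q.1 q.2) p (1, 0))
        ((ContinuousLinearMap.apply ℝ ℝ ((1 : ℝ), (0 : ℝ))).comp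
          (fderiv ℝ (fderiv ℝ (fun p : ℝ × ℝ => f p.1 p.2)) (ξ, t))) (ξ, t) :=
      (ContinuousLinearMap.apply ℝ ℝ ((1 : ℝ), (0 : ℝ))).hasFDerivAt.comp (ξ, t)
        (hdF2 (ξ, t)).hasFDerivAt
    rw [h4.fderiv]
    rfl
  have e2 : pdx (pdt f) ξ t
      = fderiv ℝ (fderiv ℝ (fun p : ℝ × ℝ => f p.1 p.2)) (ξ, t) (1, 0) (0, 1) := by
    rw [pdx_eval hf.pdt ξ t]
    have h3 : (fun p : ℝ × ℝ => pdt f p.1 p.2)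
        = fun p : ℝ × ℝ => fderiv ℝ (fun q : ℝ × ℝ => f q.1 q.2) p (0, 1) :=
      funext fun p => pdt_eval hf p.1 p.2
    rw [h3]
    have h4 : HasFDerivAt
        (fun p : ℝ × ℝ => fderiv ℝ (fun q : ℝ × ℝ => f q.1 q.2) p (0, 1))
        ((ContinuousLinearMap.apply ℝ ℝ ((0 : ℝ), (1 : ℝ))).comp
          (fderiv ℝ (fderiv ℝ (fun p : ℝ × ℝ => f p.1 p.2)) (ξ, t))) (ξ, t) :=
      (ContinuousLinearMap.apply ℝ ℝ ((0 : ℝ), (1 : ℝ))).hasFDerivAt.comp (ξ, t)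
        (hdF2 (ξ, t)).hasFDerivAt
    rw [h4.fderiv]
    rfl
  rw [e1, e2]
  exact hsymm.symm

section rules
variable {f g : ℝ → ℝ → ℝ}

lemma pdx_add (hf : Sm f) (hg : Sm g) (ξ t : ℝ) :
    pdx (fun x s => f x s + g x s) ξ t = pdx f ξ t + pdx g ξ t :=
  deriv_add (hf.sliceX t ξ) (hg.sliceX t ξ)

lemma pdx_sub (hf : Sm f) (hg : Sm g) (ξ t : ℝ) :
    pdx (fun x s => f x s - g x s) ξ t = pdx f ξ t - pdx g ξ t :=
  deriv_sub (hf.sliceX t ξ) (hg.sliceX t ξ)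

lemma pdx_mul (hf : Sm f) (hg : Sm g) (ξ t : ℝ) :
    pdx (fun x s => f x s * g x s) ξ t = pdx f ξ t * g ξ t + f ξ t * pdx g ξ t :=
  deriv_mul (hf.sliceX t ξ) (hg.sliceX t ξ)

lemma pdx_const_mul (a : ℝ) (hf : Sm f) (ξ t : ℝ) :
    pdx (fun x s => a * f x s) ξ t = a * pdx f ξ t :=
  deriv_const_mul a (hf.sliceX t ξ)

lemma pdx_const_sub (a : ℝ) (ξ t : ℝ) :
    pdx (fun x s => a - f x s) ξ t = -pdx f ξ t :=
  deriv_const_sub a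

lemma pdt_add (hf : Sm f) (hg : Sm g) (ξ t : ℝ) :
    pdt (fun x s => f x s + g x s) ξ t = pdt f ξ t + pdt g ξ t :=
  deriv_add (hf.sliceT ξ t) (hg.sliceT ξ t)

lemma pdt_sub (hf : Sm f) (hg : Sm g) (ξ t : ℝ) :
    pdt (fun x s => f x s - g x s) ξ t = pdt f ξ t - pdt g ξ t :=
  deriv_sub (hf.sliceT ξ t) (hg.sliceT ξ t)

lemma pdt_mul (hf : Sm f) (hg : Sm g) (ξ t : ℝ) :
    pdt (fun x s => f x s * g x s) ξ t = pdt f ξ t * g ξ t + f ξ t * pdt g ξ t :=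
  deriv_mul (hf.sliceT ξ t) (hg.sliceT ξ t)

lemma pdt_const_mul (a : ℝ) (hf : Sm f) (ξ t : ℝ) :
    pdt (fun x s => a * f x s) ξ t = a * pdt f ξ t :=
  deriv_const_mul a (hf.sliceT ξ t)

end rules

/-- Compatibility of the DP Lax pair.  If `φ` is a nowhere-vanishing
smooth solution of both equations of the Lax pair with spectral parameter `σ ≠ 0`
and potential `u`, then the momentum density `m = u − u_ξξ` satisfies
`m_t + (u − c) m_ξ + 3 u_ξ m = 0`. -/

theorem dp_lax_compatibility (c σ : ℝ) (hσ : σ ≠ 0) (u : ℝ → ℝ → ℝ)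
    (hu : ContDiff ℝ (⊤ : ℕ∞) (fun p : ℝ × ℝ => u p.1 p.2))
    (φ : ℝ → ℝ → ℝ)
    (hφ : ContDiff ℝ (⊤ : ℕ∞) (fun p : ℝ × ℝ => φ p.1 p.2))
    (hφne : ∀ ξ t : ℝ, φ ξ t ≠ 0)
    (hφx : ∀ ξ t : ℝ,
      pdx (pdx (pdx φ)) ξ t
        = pdx φ ξ t + σ * (u ξ t - pdx (pdx u) ξ t) * φ ξ t)
    (hφt : ∀ ξ t : ℝ,
      pdt φ ξ t
        = (1 / σ) * pdx (pdx φ) ξ t + (c - u ξ t) * pdx φ ξ t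
          + pdx u ξ t * φ ξ t) :
    ∀ ξ t : ℝ,
      pdt (fun x s => u x s - pdx (pdx u) x s) ξ t
        + (u ξ t - c) * pdx (fun x s => u x s - pdx (pdx u) x s) ξ t
        + 3 * pdx u ξ t * (u ξ t - pdx (pdx u) ξ t) = 0 := by
  have hsu : Sm u := hu
  have hsφ : Sm φ := hφ
  have hux : Sm (pdx u) := hsu.pdx
  have huxx : Sm (pdx (pdx u)) := hux.pdx
  have huxxx : Sm (pdx (pdx (pdx u))) := huxx.pdx
  set M : ℝ → ℝ → ℝ := fun x s => u x s - pdx (pdx u) x s with hMdef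
  have hM : Sm M := by rw [hMdef]; exact hsu.sub huxx
  have hMx' : Sm (pdx M) := hM.pdx
  have hp1 : Sm (pdx φ) := hsφ.pdx
  have hp2 : Sm (pdx (pdx φ)) := hp1.pdx
  have hp3 : Sm (pdx (pdx (pdx φ))) := hp2.pdx
  have hp4 : Sm (pdx (pdx (pdx (pdx φ)))) := hp3.pdx
  have hpt : Sm (pdt φ) := hsφ.pdt
  have hq1 : Sm (pdx (pdt φ)) := hpt.pdx
  have hq2 : Sm (pdx (pdx (pdt φ))) := hq1.pdx
  have hcu : Sm (fun x s => c - u x s) := Sm.const_sub c hsu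
  -- M identities
  have hM0 : ∀ a b : ℝ, M a b = u a b - pdx (pdx u) a b := by
    intro a b; rw [hMdef]
  have hMx : ∀ a b : ℝ, pdx M a b = pdx u a b - pdx (pdx (pdx u)) a b := by
    intro a b; rw [hMdef]; exact pdx_sub hsu huxx a b
  have hMxfun : pdx M = fun x s => pdx u x s - pdx (pdx (pdx u)) x s :=
    funext fun a => funext fun b => hMx a b
  have hMxx : ∀ a b : ℝ,
      pdx (pdx M) a b = pdx (pdx u) a b - pdx (pdx (pdx (pdx u))) a b := by
    intro a b; rw [hMxfun]; exact pdx_sub hux huxxx a b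
  -- Lax-x equation via M
  have hφx' : ∀ a b : ℝ,
      pdx (pdx (pdx φ)) a b = pdx φ a b + σ * M a b * φ a b := by
    intro a b; rw [hM0 a b]; exact hφx a b
  have hφxfun : pdx (pdx (pdx φ)) = fun x s => pdx φ x s + σ * M x s * φ x s :=
    funext fun a => funext fun b => hφx' a b
  have hsσM : Sm (fun x s => σ * M x s) := Sm.const_mul σ hM
  have hsσMφ : Sm (fun x s => σ * M x s * φ x s) := hsσM.mul hsφ
  -- fourth x-derivative of φ
  have hX4 : ∀ a b : ℝ, pdx (pdx (pdx (pdx φ))) a b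
      = pdx (pdx φ) a b + (σ * pdx M a b * φ a b + σ * M a b * pdx φ a b) := by
    intro a b
    simp only [hφxfun, pdx_add hp1 hsσMφ, pdx_mul hsσM hsφ, pdx_const_mul σ hM]
  have hX4fun : pdx (pdx (pdx (pdx φ)))
      = fun x s => pdx (pdx φ) x s + (σ * pdx M x s * φ x s + σ * M x s * pdx φ x s) :=
    funext fun a => funext fun b => hX4 a b
  have hsσMx : Sm (fun x s => σ * pdx M x s) := Sm.const_mul σ hMx'
  have hsA : Sm (fun x s => σ * pdx M x s * φ x s) := hsσMx.mul hsφ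
  have hsB : Sm (fun x s => σ * M x s * pdx φ x s) := hsσM.mul hp1
  -- fifth x-derivative of φ
  have hX5 : ∀ a b : ℝ, pdx (pdx (pdx (pdx (pdx φ)))) a b
      = pdx (pdx (pdx φ)) a b
        + ((σ * pdx (pdx M) a b * φ a b + σ * pdx M a b * pdx φ a b)
          + (σ * pdx M a b * pdx φ a b + σ * M a b * pdx (pdx φ) a b)) := by
    intro a b
    simp only [hX4fun, pdx_add hp2 (hsA.add hsB), pdx_add hsA hsB,
      pdx_mul hsσMx hsφ, pdx_mul hsσM hp1, pdx_const_mul σ hMx', pdx_const_mul σ hM]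
  -- first x-derivative of the time equation
  have hφtfun : pdt φ = fun x s =>
      1 / σ * pdx (pdx φ) x s + (c - u x s) * pdx φ x s + pdx u x s * φ x s :=
    funext fun a => funext fun b => hφt a b
  have hs1 : Sm (fun x s => 1 / σ * pdx (pdx φ) x s) := Sm.const_mul _ hp2
  have hs2 : Sm (fun x s => (c - u x s) * pdx φ x s) := hcu.mul hp1
  have hs3 : Sm (fun x s => pdx u x s * φ x s) := hux.mul hsφ
  have hB1 : ∀ a b : ℝ, pdx (pdt φ) a b
      = 1 / σ * pdx (pdx (pdx φ)) a b + (c - u a b) * pdx (pdx φ) a b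
        + pdx (pdx u) a b * φ a b := by
    intro a b
    simp only [hφtfun, pdx_add (hs1.add hs2) hs3, pdx_add hs1 hs2,
      pdx_const_mul (1 / σ) hp2, pdx_mul hcu hp1, pdx_mul hux hsφ,
      pdx_const_sub (f := u) c]
    ring
  have hB1fun : pdx (pdt φ) = fun x s =>
      1 / σ * pdx (pdx (pdx φ)) x s + (c - u x s) * pdx (pdx φ) x s
        + pdx (pdx u) x s * φ x s :=
    funext fun a => funext fun b => hB1 a b
  have hs1' : Sm (fun x s => 1 / σ * pdx (pdx (pdx φ)) x s) := Sm.const_mul _ hp3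
  have hs2' : Sm (fun x s => (c - u x s) * pdx (pdx φ) x s) := hcu.mul hp2
  have hs3' : Sm (fun x s => pdx (pdx u) x s * φ x s) := huxx.mul hsφ
  have hB2 : ∀ a b : ℝ, pdx (pdx (pdt φ)) a b
      = 1 / σ * pdx (pdx (pdx (pdx φ))) a b + (c - u a b) * pdx (pdx (pdx φ)) a b
        - pdx u a b * pdx (pdx φ) a b + pdx (pdx (pdx u)) a b * φ a b
        + pdx (pdx u) a b * pdx φ a b := by
    intro a b
    simp only [hB1fun, pdx_add (hs1'.add hs2') hs3', pdx_add hs1' hs2',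
      pdx_const_mul (1 / σ) hp3, pdx_mul hcu hp2, pdx_mul huxx hsφ,
      pdx_const_sub (f := u) c]
    ring
  have hB2fun : pdx (pdx (pdt φ)) = fun x s =>
      1 / σ * pdx (pdx (pdx (pdx φ))) x s + (c - u x s) * pdx (pdx (pdx φ)) x s
        - pdx u x s * pdx (pdx φ) x s + pdx (pdx (pdx u)) x s * φ x s
        + pdx (pdx u) x s * pdx φ x s :=
    funext fun a => funext fun b => hB2 a b
  have hT1 : Sm (fun x s => 1 / σ * pdx (pdx (pdx (pdx φ))) x s) := Sm.const_mul _ hp4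
  have hT2 : Sm (fun x s => (c - u x s) * pdx (pdx (pdx φ)) x s) := hcu.mul hp3
  have hT3 : Sm (fun x s => pdx u x s * pdx (pdx φ) x s) := hux.mul hp2
  have hT4 : Sm (fun x s => pdx (pdx (pdx u)) x s * φ x s) := huxxx.mul hsφ
  have hT5 : Sm (fun x s => pdx (pdx u) x s * pdx φ x s) := huxx.mul hp1
  have hB3 : ∀ a b : ℝ, pdx (pdx (pdx (pdt φ))) a b
      = 1 / σ * pdx (pdx (pdx (pdx (pdx φ)))) a b
        + (c - u a b) * pdx (pdx (pdx (pdx φ))) a b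
        - 2 * pdx u a b * pdx (pdx (pdx φ)) a b
        + pdx (pdx (pdx (pdx u))) a b * φ a b
        + 2 * pdx (pdx (pdx u)) a b * pdx φ a b := by
    intro a b
    simp only [hB2fun, pdx_add (((hT1.add hT2).sub hT3).add hT4) hT5,
      pdx_add ((hT1.add hT2).sub hT3) hT4, pdx_sub (hT1.add hT2) hT3,
      pdx_add hT1 hT2, pdx_const_mul (1 / σ) hp4, pdx_mul hcu hp3,
      pdx_mul hux hp2, pdx_mul huxxx hsφ, pdx_mul huxx hp1,
      pdx_const_sub (f := u) c]
    ring
  -- time derivative of the Lax-x equation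
  have h1 : ∀ a b : ℝ, pdt (pdx (pdx (pdx φ))) a b
      = pdt (pdx φ) a b + (σ * pdt M a b * φ a b + σ * M a b * pdt φ a b) := by
    intro a b
    simp only [hφxfun, pdt_add hp1 hsσMφ, pdt_mul hsσM hsφ, pdt_const_mul σ hM]
  -- commuting mixed partials
  have h2 : ∀ a b : ℝ, pdt (pdx (pdx (pdx φ))) a b
      = pdx (pdx (pdx (pdt φ))) a b := by
    intro a b
    have c2fun : pdt (pdx (pdx φ)) = pdx (pdt (pdx φ)) :=
      funext fun a => funext fun b => pdt_pdx_comm hp1 a b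
    have c3fun : pdt (pdx φ) = pdx (pdt φ) :=
      funext fun a => funext fun b => pdt_pdx_comm hsφ a b
    rw [pdt_pdx_comm hp2 a b, c2fun, c3fun]
  -- endgame
  intro a b
  have hMain := (h1 a b).symm.trans ((h2 a b).trans (hB3 a b))
  rw [pdt_pdx_comm hsφ a b, hB1 a b, hφt a b, hX5 a b, hX4 a b, hφx' a b,
    hMxx a b, hMx a b, hM0 a b] at hMain
  rw [hMx a b]
  have key : σ * σ * φ a b *
      (pdt M a b + (u a b - c) * (pdx u a b - pdx (pdx (pdx u)) a b)
        + 3 * pdx u a b * (u a b - pdx (pdx u) a b)) = 0 := by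
    field_simp at hMain
    linear_combination hMain
  have hne : σ * σ * φ a b ≠ 0 := mul_ne_zero (mul_ne_zero hσ hσ) (hφne a b)
  exact (mul_eq_zero.mp key).resolve_left hne
end

section
/- Let I ⊆ ℝ be an open interval and let U : ℝ × I → ℝ be infinitely differentiable such that for each c ∈ I the function ξ ↦ U(ξ, c) satisfies the profile equation −(c − U)·∂_ξ(U − ∂²_ξU) + 3(∂_ξU)·(U − ∂²_ξU) = 0 on ℝ. Fix c ∈ I and write u₀(ξ) = U(ξ, c) and v(ξ) = ∂_c U(ξ, c). Then for all ξ ∈ ℝ: c·(v'(ξ) − v'''(ξ)) + 3u₀'(ξ)v''(ξ) + 3u₀''(ξ)v'(ξ) − 4u₀(ξ)v'(ξ) − 4u₀'(ξ)v(ξ) + u₀(ξ)v'''(ξ) + u₀'''(ξ)v(ξ) = −(u₀'(ξ) − u₀'''(ξ)), where ' denotes ∂_ξ. -/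
open Filter

local notation "∞'" => ((⊤:ℕ∞) : WithTop ℕ∞)

noncomputable def pd (v : ℝ × ℝ) (g : ℝ × ℝ → ℝ) : ℝ × ℝ → ℝ := fun p => fderiv ℝ g p v

lemma hle1 : (1 : WithTop ℕ∞) ≤ ∞' := by exact_mod_cast le_top

lemma pd_contDiffOn {g : ℝ × ℝ → ℝ} {O : Set (ℝ×ℝ)} (hO : IsOpen O)
    (hg : ContDiffOn ℝ ∞' g O) (v : ℝ×ℝ) : ContDiffOn ℝ ∞' (pd v g) O := by
  have h1 : ContDiffOn ℝ ∞' (fderiv ℝ g) O :=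
    ((contDiffOn_infty_iff_fderiv_of_isOpen hO).1 hg).2
  exact h1.clm_apply contDiffOn_const

lemma hasDerivAt_pfst {g : ℝ × ℝ → ℝ} {O : Set (ℝ×ℝ)} (hO : IsOpen O)
    (hg : ContDiffOn ℝ ∞' g O) {a b : ℝ} (hp : (a,b) ∈ O) :
    HasDerivAt (fun x => g (x, b)) (pd (1,0) g (a,b)) a := by
  have hd := ((hg.contDiffAt (hO.mem_nhds hp)).differentiableAt (by simp)).hasFDerivAt
  have h2 : HasDerivAt (fun x : ℝ => (x, b)) ((1:ℝ),(0:ℝ)) a :=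
    HasDerivAt.prodMk (hasDerivAt_id a) (hasDerivAt_const a b)
  exact hd.comp_hasDerivAt a h2

lemma hasDerivAt_psnd {g : ℝ × ℝ → ℝ} {O : Set (ℝ×ℝ)} (hO : IsOpen O)
    (hg : ContDiffOn ℝ ∞' g O) {a b : ℝ} (hp : (a,b) ∈ O) :
    HasDerivAt (fun s => g (a, s)) (pd (0,1) g (a,b)) b := by
  have hd := ((hg.contDiffAt (hO.mem_nhds hp)).differentiableAt (by simp)).hasFDerivAt
  have h2 : HasDerivAt (fun s : ℝ => (a, s)) ((0:ℝ),(1:ℝ)) b :=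
    HasDerivAt.prodMk (hasDerivAt_const b a) (hasDerivAt_id b)
  exact hd.comp_hasDerivAt b h2

lemma pd_congr {a b : ℝ×ℝ → ℝ} {O : Set (ℝ×ℝ)} (hO : IsOpen O) {p : ℝ×ℝ} (hp : p ∈ O)
    (h : ∀ q ∈ O, a q = b q) (v : ℝ×ℝ) : pd v a p = pd v b p := by
  have : fderiv ℝ a p = fderiv ℝ b p :=
    Filter.EventuallyEq.fderiv_eq (by filter_upwards [hO.mem_nhds hp] with q hq using h q hq)
  simp [pd, this]

lemma pd_comm {g : ℝ × ℝ → ℝ} {O : Set (ℝ×ℝ)} (hO : IsOpen O)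
    (hg : ContDiffOn ℝ ∞' g O) {p : ℝ×ℝ} (hp : p ∈ O) :
    pd (0,1) (pd (1,0) g) p = pd (1,0) (pd (0,1) g) p := by
  have hfd : ContDiffOn ℝ ∞' (fderiv ℝ g) O :=
    ((contDiffOn_infty_iff_fderiv_of_isOpen hO).1 hg).2
  have hdiff : DifferentiableAt ℝ (fderiv ℝ g) p :=
    (hfd.contDiffAt (hO.mem_nhds hp)).differentiableAt (by simp)
  have hsym := second_derivative_symmetric_of_eventually (f := g) (f' := fderiv ℝ g)
    (by filter_upwards [hO.mem_nhds hp] with q hq using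
      ((hg.contDiffAt (hO.mem_nhds hq)).differentiableAt (by simp)).hasFDerivAt)
    hdiff.hasFDerivAt
  have key : ∀ v w : ℝ×ℝ, pd v (pd w g) p = fderiv ℝ (fderiv ℝ g) p v w := by
    intro v w
    have h := hdiff.hasFDerivAt.clm_apply (hasFDerivAt_const w p)
    have h2 := h.fderiv
    show fderiv ℝ (fun q => fderiv ℝ g q w) p v = _
    rw [h2]
    simp
  rw [key, key, hsym]

/-- Jordan-chain relation for the wave-speed variation.  If `U(ξ, c)` is
a smooth family of DP profile solutions parametrized by speeds `c` in an open
interval `I`, then for `c ∈ I`, writing `u₀ = U(·, c)` and `v = ∂_c U(·, c)`,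
the function `v` satisfies `𝒜[u₀]v`-type identity
`c(v' − v''') + 3u₀'v'' + 3u₀''v' − 4u₀v' − 4u₀'v + u₀v''' + u₀'''v = −(u₀' − u₀''')`. -/
theorem dp_wave_speed_variation (I : Set ℝ) (hIopen : IsOpen I)
    (hIconn : I.OrdConnected) (U : ℝ → ℝ → ℝ)
    (hU : ContDiffOn ℝ (⊤ : ℕ∞) (fun p : ℝ × ℝ => U p.1 p.2) (Set.univ ×ˢ I))
    (hprof : ∀ c ∈ I, ∀ ξ : ℝ,
      -(c - U ξ c) * deriv (fun x => U x c - deriv (deriv (fun y => U y c)) x) ξ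
        + 3 * deriv (fun x => U x c) ξ
            * (U ξ c - deriv (deriv (fun x => U x c)) ξ) = 0)
    (c : ℝ) (hc : c ∈ I) :
    ∀ ξ : ℝ,
      c * (deriv (fun x => deriv (fun s => U x s) c) ξ
            - deriv (deriv (deriv (fun x => deriv (fun s => U x s) c))) ξ)
        + 3 * deriv (fun x => U x c) ξ
            * deriv (deriv (fun x => deriv (fun s => U x s) c)) ξ
        + 3 * deriv (deriv (fun x => U x c)) ξ
            * deriv (fun x => deriv (fun s => U x s) c) ξ
        - 4 * U ξ c * deriv (fun x => deriv (fun s => U x s) c) ξ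
        - 4 * deriv (fun x => U x c) ξ * deriv (fun s => U ξ s) c
        + U ξ c * deriv (deriv (deriv (fun x => deriv (fun s => U x s) c))) ξ
        + deriv (deriv (deriv (fun x => U x c))) ξ * deriv (fun s => U ξ s) c
      = -(deriv (fun x => U x c) ξ - deriv (deriv (deriv (fun x => U x c))) ξ) := by
  intro ξ
  set O : Set (ℝ×ℝ) := Set.univ ×ˢ I with hOdef
  have hO : IsOpen O := isOpen_univ.prod hIopen
  set f : ℝ×ℝ → ℝ := fun p => U p.1 p.2 with hfdef
  have hf : ContDiffOn ℝ ∞' f O := hU.of_le (by simp)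
  have hmem : ∀ (x s : ℝ), s ∈ I → (x, s) ∈ O := fun x s hs => ⟨Set.mem_univ x, hs⟩
  have hf1 := pd_contDiffOn hO hf (1,0)
  have hf2 := pd_contDiffOn hO hf1 (1,0)
  have hf3 := pd_contDiffOn hO hf2 (1,0)
  have hg := pd_contDiffOn hO hf (0,1)
  have hg1 := pd_contDiffOn hO hg (1,0)
  have hg2 := pd_contDiffOn hO hg1 (1,0)
  -- function-level identities in the first variable, for any speed s ∈ I
  have A0 : ∀ s ∈ I, deriv (fun x => U x s) = fun x => pd (1,0) f (x,s) :=
    fun s hs => funext fun x => (hasDerivAt_pfst hO hf (hmem x s hs)).deriv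
  have A1 : ∀ s ∈ I, deriv (fun x => pd (1,0) f (x,s)) = fun x => pd (1,0) (pd (1,0) f) (x,s) :=
    fun s hs => funext fun x => (hasDerivAt_pfst hO hf1 (hmem x s hs)).deriv
  -- the profile equation in pd-form
  have hP : ∀ s ∈ I,
      -(s - f (ξ,s)) * (pd (1,0) f (ξ,s) - pd (1,0) (pd (1,0) (pd (1,0) f)) (ξ,s))
        + 3 * pd (1,0) f (ξ,s) * (f (ξ,s) - pd (1,0) (pd (1,0) f) (ξ,s)) = 0 := by
    intro s hs
    have h := hprof s hs ξ
    have hfun : (fun x => U x s - deriv (deriv (fun y => U y s)) x)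
        = fun x => f (x,s) - pd (1,0) (pd (1,0) f) (x,s) := by
      funext x; rw [A0 s hs, A1 s hs]
    have hin : deriv (fun x => U x s - deriv (deriv (fun y => U y s)) x) ξ
        = pd (1,0) f (ξ,s) - pd (1,0) (pd (1,0) (pd (1,0) f)) (ξ,s) := by
      rw [hfun]
      exact ((hasDerivAt_pfst hO hf (hmem ξ s hs)).sub
        (hasDerivAt_pfst hO hf2 (hmem ξ s hs))).deriv
    have hA : deriv (fun x => U x s) ξ = pd (1,0) f (ξ,s) :=
      (hasDerivAt_pfst hO hf (hmem ξ s hs)).deriv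
    have hB : deriv (deriv (fun x => U x s)) ξ = pd (1,0) (pd (1,0) f) (ξ,s) := by
      rw [A0 s hs]; exact (hasDerivAt_pfst hO hf1 (hmem ξ s hs)).deriv
    rw [hin, hA, hB] at h
    exact h
  -- differentiate the profile equation in the speed variable at c
  have h0 : HasDerivAt (fun s => f (ξ,s)) (pd (0,1) f (ξ,c)) c :=
    hasDerivAt_psnd hO hf (hmem ξ c hc)
  have h1 : HasDerivAt (fun s => pd (1,0) f (ξ,s)) (pd (0,1) (pd (1,0) f) (ξ,c)) c :=
    hasDerivAt_psnd hO hf1 (hmem ξ c hc)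
  have h2 : HasDerivAt (fun s => pd (1,0) (pd (1,0) f) (ξ,s))
      (pd (0,1) (pd (1,0) (pd (1,0) f)) (ξ,c)) c :=
    hasDerivAt_psnd hO hf2 (hmem ξ c hc)
  have h3 : HasDerivAt (fun s => pd (1,0) (pd (1,0) (pd (1,0) f)) (ξ,s))
      (pd (0,1) (pd (1,0) (pd (1,0) (pd (1,0) f))) (ξ,c)) c :=
    hasDerivAt_psnd hO hf3 (hmem ξ c hc)
  have hHD := ((((hasDerivAt_id c).sub h0).neg.mul (h1.sub h3)).add
    ((h1.const_mul 3).mul (h0.sub h2)))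
  have hder0 : deriv (fun s =>
      -(s - f (ξ,s)) * (pd (1,0) f (ξ,s) - pd (1,0) (pd (1,0) (pd (1,0) f)) (ξ,s))
        + 3 * pd (1,0) f (ξ,s) * (f (ξ,s) - pd (1,0) (pd (1,0) f) (ξ,s))) c = 0 := by
    have hev : (fun s =>
      -(s - f (ξ,s)) * (pd (1,0) f (ξ,s) - pd (1,0) (pd (1,0) (pd (1,0) f)) (ξ,s))
        + 3 * pd (1,0) f (ξ,s) * (f (ξ,s) - pd (1,0) (pd (1,0) f) (ξ,s)))
        =ᶠ[nhds c] (fun _ => (0:ℝ)) := by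
      filter_upwards [hIopen.mem_nhds hc] with s hs using hP s hs
    rw [hev.deriv_eq]; exact deriv_const c 0
  have hE := hHD.deriv
  change deriv (fun s =>
      -(s - f (ξ,s)) * (pd (1,0) f (ξ,s) - pd (1,0) (pd (1,0) (pd (1,0) f)) (ξ,s))
        + 3 * pd (1,0) f (ξ,s) * (f (ξ,s) - pd (1,0) (pd (1,0) f) (ξ,s))) c = _ at hE
  rw [hder0] at hE
  simp only [Pi.add_apply, Pi.mul_apply, Pi.sub_apply, Pi.neg_apply, id_eq] at hE
  -- commute the mixed partials
  have hc1 : ∀ p ∈ O, pd (0,1) (pd (1,0) f) p = pd (1,0) (pd (0,1) f) p :=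
    fun p hp => pd_comm hO hf hp
  have hc2 : ∀ p ∈ O, pd (0,1) (pd (1,0) (pd (1,0) f)) p
      = pd (1,0) (pd (1,0) (pd (0,1) f)) p :=
    fun p hp => (pd_comm hO hf1 hp).trans (pd_congr hO hp hc1 (1,0))
  have hc3 : ∀ p ∈ O, pd (0,1) (pd (1,0) (pd (1,0) (pd (1,0) f))) p
      = pd (1,0) (pd (1,0) (pd (1,0) (pd (0,1) f))) p :=
    fun p hp => (pd_comm hO hf2 hp).trans (pd_congr hO hp hc2 (1,0))
  rw [hc1 _ (hmem ξ c hc), hc2 _ (hmem ξ c hc), hc3 _ (hmem ξ c hc)] at hE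
  -- rewrite the goal in pd-form
  have B0 : (fun x => deriv (fun s => U x s) c) = fun x => pd (0,1) f (x,c) :=
    funext fun x => (hasDerivAt_psnd hO hf (hmem x c hc)).deriv
  have B1 : deriv (fun x => pd (0,1) f (x,c)) = fun x => pd (1,0) (pd (0,1) f) (x,c) :=
    funext fun x => (hasDerivAt_pfst hO hg (hmem x c hc)).deriv
  have B2 : deriv (fun x => pd (1,0) (pd (0,1) f) (x,c))
      = fun x => pd (1,0) (pd (1,0) (pd (0,1) f)) (x,c) :=
    funext fun x => (hasDerivAt_pfst hO hg1 (hmem x c hc)).deriv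
  have ev : deriv (fun s => U ξ s) c = pd (0,1) f (ξ,c) :=
    (hasDerivAt_psnd hO hf (hmem ξ c hc)).deriv
  have ev1 : deriv (fun x => deriv (fun s => U x s) c) ξ = pd (1,0) (pd (0,1) f) (ξ,c) := by
    rw [B0]; exact (hasDerivAt_pfst hO hg (hmem ξ c hc)).deriv
  have ev2 : deriv (deriv (fun x => deriv (fun s => U x s) c)) ξ
      = pd (1,0) (pd (1,0) (pd (0,1) f)) (ξ,c) := by
    rw [B0, B1]; exact (hasDerivAt_pfst hO hg1 (hmem ξ c hc)).deriv
  have ev3 : deriv (deriv (deriv (fun x => deriv (fun s => U x s) c))) ξ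
      = pd (1,0) (pd (1,0) (pd (1,0) (pd (0,1) f))) (ξ,c) := by
    rw [B0, B1, B2]; exact (hasDerivAt_pfst hO hg2 (hmem ξ c hc)).deriv
  have e1' : deriv (fun x => U x c) ξ = pd (1,0) f (ξ,c) :=
    (hasDerivAt_pfst hO hf (hmem ξ c hc)).deriv
  have e2' : deriv (deriv (fun x => U x c)) ξ = pd (1,0) (pd (1,0) f) (ξ,c) := by
    rw [A0 c hc]; exact (hasDerivAt_pfst hO hf1 (hmem ξ c hc)).deriv
  have e3' : deriv (deriv (deriv (fun x => U x c))) ξ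
      = pd (1,0) (pd (1,0) (pd (1,0) f)) (ξ,c) := by
    rw [A0 c hc, A1 c hc]; exact (hasDerivAt_pfst hO hf2 (hmem ξ c hc)).deriv
  have hu : U ξ c = f (ξ,c) := rfl
  rw [ev, ev1, ev2, ev3, e1', e2', e3', hu]
  linear_combination hE
end

section
/- Let k, c, σ ∈ ℂ with k ≠ 0 and σ ≠ 0, and let l₁, l₂ ∈ ℂ with l₁ ≠ l₂ and l_i³ = l_i + kσ for i = 1, 2. Define M := l₁ − l₂ and λ := (l₁² − l₂²)/σ + (c − k)(l₁ − l₂). Then (c − k)M³ − λM² + (4k − c)M + λ = 0. -/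
/-- If `l₁ ≠ l₂` both satisfy `l³ = l + kσ` with `k ≠ 0`, `σ ≠ 0`, then
`M = l₁ − l₂` and `λ = (l₁² − l₂²)/σ + (c − k)(l₁ − l₂)` satisfy the cubic
`(c − k)M³ − λM² + (4k − c)M + λ = 0`. -/
theorem dp_M_cubic (k c σ l₁ l₂ : ℂ) (hk : k ≠ 0) (hσ : σ ≠ 0) (hne : l₁ ≠ l₂)
    (h1 : l₁ ^ 3 = l₁ + k * σ) (h2 : l₂ ^ 3 = l₂ + k * σ) :
    (c - k) * (l₁ - l₂) ^ 3
      - ((l₁ ^ 2 - l₂ ^ 2) / σ + (c - k) * (l₁ - l₂)) * (l₁ - l₂) ^ 2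
      + (4 * k - c) * (l₁ - l₂)
      + ((l₁ ^ 2 - l₂ ^ 2) / σ + (c - k) * (l₁ - l₂)) = 0 := by
  have hd : l₁ - l₂ ≠ 0 := sub_ne_zero.mpr hne
  have key1 : l₁ ^ 2 + l₁ * l₂ + l₂ ^ 2 = 1 := by
    have h : (l₁ - l₂) * (l₁ ^ 2 + l₁ * l₂ + l₂ ^ 2) = (l₁ - l₂) * 1 := by
      linear_combination h1 - h2
    exact mul_left_cancel₀ hd h
  have key2 : l₁ * l₂ * (l₁ + l₂) = -(k * σ) := by
    linear_combination l₁ * key1 - h1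
  field_simp
  linear_combination 3 * (l₁ - l₂) * key2 - (l₁ + l₂) * (l₁ - l₂) * key1
end

section
/- Let k, c ∈ ℝ with 0 < k and 4k < c, let t ∈ ℝ with t ≠ 0, and set λ = it ∈ ℂ. Then the cubic polynomial q(M) = (c − k)M³ − λM² + (4k − c)M + λ over ℂ has three pairwise distinct roots, and none of 0, 2, −2 is a root of q. -/
open Polynomial

/-!
Over `ℂ` a cubic with nonzero leading coefficient has three roots counted with multiplicity, and
they are distinct exactly when its discriminant is nonzero. At `λ = it` the discriminant is the
real number `4t⁴ + (8c² + 44ck − 61k²)t² + 4(c − k)(c − 4k)³`, every term of which is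
nonnegative and the last positive once `0 < k < c/4`. The values at `0, 2, −2` are `λ`,
`6c − 3λ` and `−6c − 3λ`: the first is nonzero as `t ≠ 0`, the others have real part `±6c ≠ 0`.
-/

theorem Cubic.nodup_roots_of_discr_ne_zero {K : Type*} [Field K] [IsAlgClosed K] {P : Cubic K}
    (ha : P.a ≠ 0) (hd : P.discr ≠ 0) : P.toPoly.roots.Nodup := by
  have h := (Cubic.discr_ne_zero_iff_roots_nodup (φ := RingHom.id K) ha
    (IsAlgClosed.splits _)).mp hd
  rwa [Cubic.map_roots, Polynomial.map_id] at h

/-- `l` is the stability eigenvalue `λ`; the roots are the admissible rates `M = l₁ − l₂`. -/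
def dpRateCubic {R : Type*} [CommRing R] (k c l : R) : Cubic R :=
  ⟨c - k, -l, 4 * k - c, l⟩

section dpRateCubic

variable {R : Type*} [CommRing R] (k c l : R)

theorem dpRateCubic_toPoly :
    (dpRateCubic k c l).toPoly = C (c - k) * X ^ 3 - C l * X ^ 2 + C (4 * k - c) * X + C l := by
  simp only [dpRateCubic, Cubic.toPoly, map_neg]
  ring

theorem dpRateCubic_discr :
    (dpRateCubic k c l).discr =
      4 * l ^ 4 + (61 * k ^ 2 - 8 * c ^ 2 - 44 * c * k) * l ^ 2
        + 4 * (c - k) * (c - 4 * k) ^ 3 := by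
  simp only [dpRateCubic, Cubic.discr]
  ring

theorem eval_zero_dpRateCubic_toPoly : (dpRateCubic k c l).toPoly.eval 0 = l := by
  simp [dpRateCubic_toPoly]

theorem eval_two_dpRateCubic_toPoly : (dpRateCubic k c l).toPoly.eval 2 = 6 * c - 3 * l := by
  simp only [dpRateCubic_toPoly, eval_add, eval_sub, eval_mul, eval_pow, eval_C, eval_X]
  ring

theorem eval_neg_two_dpRateCubic_toPoly :
    (dpRateCubic k c l).toPoly.eval (-2) = -(6 * c) - 3 * l := by
  simp only [dpRateCubic_toPoly, eval_add, eval_sub, eval_mul, eval_pow, eval_C, eval_X]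
  ring

end dpRateCubic

theorem dpRateCubic_discr_pos {k c t : ℝ} (hk : 0 < k) (hck : 4 * k < c) :
    0 < 4 * t ^ 4 + (8 * c ^ 2 + 44 * c * k - 61 * k ^ 2) * t ^ 2
      + 4 * (c - k) * (c - 4 * k) ^ 3 := by
  have hmid : 0 ≤ 8 * c ^ 2 + 44 * c * k - 61 * k ^ 2 := by nlinarith
  have hconst : 0 < (c - k) * (c - 4 * k) ^ 3 := mul_pos (by linarith) (pow_pos (by linarith) 3)
  have hquartic : 0 ≤ t ^ 4 := by positivity
  nlinarith [mul_nonneg hmid (sq_nonneg t)]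

theorem dpRateCubic_discr_I_mul_ofReal (k c t : ℝ) :
    (dpRateCubic (k : ℂ) c (Complex.I * t)).discr =
      ((4 * t ^ 4 + (8 * c ^ 2 + 44 * c * k - 61 * k ^ 2) * t ^ 2
        + 4 * (c - k) * (c - 4 * k) ^ 3 : ℝ) : ℂ) := by
  rw [dpRateCubic_discr, mul_pow, mul_pow, Complex.I_sq, Complex.I_pow_four]
  push_cast
  ring

/-- For `0 < k`, `4k < c` and `λ = it` with `t ≠ 0` real, the cubic
`(c − k)M³ − λM² + (4k − c)M + λ` has three pairwise distinct roots, and none of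
`0`, `2`, `−2` is a root. -/
theorem dp_M_cubic_distinct_roots (k c t : ℝ) (hk : 0 < k) (hck : 4 * k < c)
    (ht : t ≠ 0) :
    Multiset.card
        ((C ((c : ℂ) - (k : ℂ)) * X ^ 3 - C (Complex.I * (t : ℂ)) * X ^ 2
            + C (4 * (k : ℂ) - (c : ℂ)) * X + C (Complex.I * (t : ℂ)) : ℂ[X]).roots)
        = 3 ∧
    ((C ((c : ℂ) - (k : ℂ)) * X ^ 3 - C (Complex.I * (t : ℂ)) * X ^ 2
        + C (4 * (k : ℂ) - (c : ℂ)) * X + C (Complex.I * (t : ℂ)) : ℂ[X]).roots).Nodup ∧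
    (C ((c : ℂ) - (k : ℂ)) * X ^ 3 - C (Complex.I * (t : ℂ)) * X ^ 2
        + C (4 * (k : ℂ) - (c : ℂ)) * X + C (Complex.I * (t : ℂ)) : ℂ[X]).eval 0 ≠ 0 ∧
    (C ((c : ℂ) - (k : ℂ)) * X ^ 3 - C (Complex.I * (t : ℂ)) * X ^ 2
        + C (4 * (k : ℂ) - (c : ℂ)) * X + C (Complex.I * (t : ℂ)) : ℂ[X]).eval 2 ≠ 0 ∧
    (C ((c : ℂ) - (k : ℂ)) * X ^ 3 - C (Complex.I * (t : ℂ)) * X ^ 2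
        + C (4 * (k : ℂ) - (c : ℂ)) * X + C (Complex.I * (t : ℂ)) : ℂ[X]).eval (-2) ≠ 0 := by
  rw [← dpRateCubic_toPoly]
  set P := dpRateCubic (k : ℂ) c (Complex.I * t)
  have ha : P.a ≠ 0 := by
    rw [show P.a = ((c - k : ℝ) : ℂ) by push_cast; rfl, Complex.ofReal_ne_zero]
    linarith
  have hd : P.discr ≠ 0 := by
    rw [dpRateCubic_discr_I_mul_ofReal, Complex.ofReal_ne_zero]
    exact (dpRateCubic_discr_pos hk hck).ne'
  have hc : 0 < c := by linarith
  refine ⟨IsAlgClosed.card_roots_eq_natDegree.trans (Cubic.natDegree_of_a_ne_zero ha),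
    Cubic.nodup_roots_of_discr_ne_zero ha hd, ?_, ?_, ?_⟩
  · rw [eval_zero_dpRateCubic_toPoly]
    exact mul_ne_zero Complex.I_ne_zero (Complex.ofReal_ne_zero.mpr ht)
  · rw [eval_two_dpRateCubic_toPoly]
    exact Complex.ne_zero_of_re_pos (by simpa using hc)
  · rw [eval_neg_two_dpRateCubic_toPoly, sub_eq_neg_add, ← neg_add, neg_ne_zero]
    exact Complex.ne_zero_of_re_pos (by simpa using hc)
end
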